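/- Let a, m > 0 and −π < β < π be real, and let x, y ∈ ℝ. Then the identity f(y − x; m, β) · f(x; a, β) = f(y; a + m, β) · φ(x; a, m − iy, a, m + iy) holds, where f denotes the hyperbolic secant density and φ the continuous Hahn weight. -/

import Mathlib

open MeasureTheory Complex Real

/-- The hyperbolic secant density
`f(x;a,β) = (2cos(β/2))^{2a}/(2π·Γ(2a)) · Γ(a+ix)·Γ(a−ix) · e^{βx}`. -/
noncomputable def secant (x : ℝ) (a β : ℝ) : ℂ :=
  (((2 * Real.cos (β / 2)) ^ (2 * a) / (2 * Real.pi * Real.Gamma (2 * a)) : ℝ) : ℂ) *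
    (Complex.Gamma ((a : ℂ) + Complex.I * x) * Complex.Gamma ((a : ℂ) - Complex.I * x)) *
    (Real.exp (β * x) : ℂ)
/-- The continuous Hahn weight
`φ(x;a,b,c,d) = Γ(a+b+c+d)·Γ(a+ix)·Γ(b+ix)·Γ(c−ix)·Γ(d−ix)
  / [2π·Γ(a+c)·Γ(b+c)·Γ(a+d)·Γ(b+d)]`. -/
noncomputable def hahn (x : ℝ) (a b c d : ℂ) : ℂ :=
  Complex.Gamma (a + b + c + d) *
    Complex.Gamma (a + Complex.I * x) * Complex.Gamma (b + Complex.I * x) *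
    Complex.Gamma (c - Complex.I * x) * Complex.Gamma (d - Complex.I * x) /
  (2 * Real.pi * Complex.Gamma (a + c) * Complex.Gamma (b + c) *
    Complex.Gamma (a + d) * Complex.Gamma (b + d))

/-- the identity
`f(y−x;m,β)·f(x;a,β) = f(y;a+m,β)·φ(x;a,m−iy,a,m+iy)`
relating hyperbolic secant densities and the continuous Hahn weight. -/
theorem secant_hahn_identity (a m β : ℝ) (x y : ℝ)
    (ha : 0 < a) (hm : 0 < m) (hβ₁ : -Real.pi < β) (hβ₂ : β < Real.pi) :
    secant (y - x) m β * secant x a β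
      = secant y (a + m) β *
          hahn x (a : ℂ) ((m : ℂ) - Complex.I * y) (a : ℂ) ((m : ℂ) + Complex.I * y) := by
  have hc : (0:ℝ) < 2 * Real.cos (β / 2) := by
    have : 0 < Real.cos (β / 2) := Real.cos_pos_of_mem_Ioo ⟨by linarith, by linarith⟩
    linarith
  unfold secant hahn
  -- rewrite gamma arguments
  rw [show ((m:ℂ) + Complex.I * ((y - x : ℝ):ℂ)) = (m:ℂ) + Complex.I * (y:ℝ) - Complex.I * (x:ℝ)
        by push_cast; ring,
      show ((m:ℂ) - Complex.I * ((y - x : ℝ):ℂ)) = (m:ℂ) - Complex.I * (y:ℝ) + Complex.I * (x:ℝ)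
        by push_cast; ring,
      show ((a:ℂ) + ((m:ℂ) - Complex.I * y) + (a:ℂ) + ((m:ℂ) + Complex.I * y))
          = ((2 * (a + m) : ℝ) : ℂ) by push_cast; ring,
      show ((a:ℂ) + (a:ℂ)) = ((2 * a : ℝ) : ℂ) by push_cast; ring,
      show ((m:ℂ) - Complex.I * y + ((m:ℂ) + Complex.I * y)) = ((2 * m : ℝ) : ℂ) by
        push_cast; ring,
      show ((m:ℂ) - Complex.I * y + (a:ℂ)) = (((a + m : ℝ)):ℂ) - Complex.I * y by
        push_cast; ring,
      show ((a:ℂ) + ((m:ℂ) + Complex.I * y)) = (((a + m : ℝ)):ℂ) + Complex.I * y by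
        push_cast; ring,
      Complex.Gamma_ofReal, Complex.Gamma_ofReal, Complex.Gamma_ofReal]
  rw [show β * (y - x) = β * y - β * x by ring, Real.exp_sub,
      show 2 * (a + m) = 2 * a + 2 * m by ring, Real.rpow_add hc]
  have hπ : ((Real.pi : ℝ) : ℂ) ≠ 0 := Complex.ofReal_ne_zero.mpr Real.pi_ne_zero
  have hGa : ((Real.Gamma (2 * a) : ℝ) : ℂ) ≠ 0 :=
    Complex.ofReal_ne_zero.mpr (Real.Gamma_pos_of_pos (by linarith)).ne'
  have hGm : ((Real.Gamma (2 * m) : ℝ) : ℂ) ≠ 0 :=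
    Complex.ofReal_ne_zero.mpr (Real.Gamma_pos_of_pos (by linarith)).ne'
  have hGam : ((Real.Gamma (2 * a + 2 * m) : ℝ) : ℂ) ≠ 0 :=
    Complex.ofReal_ne_zero.mpr (Real.Gamma_pos_of_pos (by linarith)).ne'
  have hre1 : Complex.Gamma ((((a + m : ℝ)):ℂ) + Complex.I * y) ≠ 0 := by
    apply Complex.Gamma_ne_zero_of_re_pos; simp; linarith
  have hre2 : Complex.Gamma ((((a + m : ℝ)):ℂ) - Complex.I * y) ≠ 0 := by
    apply Complex.Gamma_ne_zero_of_re_pos; simp; linarith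
  have hex : ((Real.exp (β * x) : ℝ) : ℂ) ≠ 0 :=
    Complex.ofReal_ne_zero.mpr (Real.exp_ne_zero _)
  have hre1' : Complex.Gamma ((a:ℂ) + m + Complex.I * y) ≠ 0 := by
    apply Complex.Gamma_ne_zero_of_re_pos; simp; linarith
  have hre2' : Complex.Gamma ((a:ℂ) + m - Complex.I * y) ≠ 0 := by
    apply Complex.Gamma_ne_zero_of_re_pos; simp; linarith
  push_cast
  field_simp [Complex.exp_ne_zero, hre1', hre2', hπ, hGa, hGm, hGam, hex]
  rw [mul_div_cancel_right₀ _ (Complex.ofReal_ne_zero.mpr (Real.Gamma_pos_of_pos (by linarith : (0:ℝ) < 2 * (a + m))).ne')]
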